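/- arXiv:1502.04890 — 3 statements merged into one kernel-verified Lean document; each statement's English description precedes it below -/
import Mathlib

section
/- The Jaccard distance satisfies the triangle inequality: for finite sets A, B, C (with all pairwise unions nonempty), d_J(A,C) ≤ d_J(A,B) + d_J(B,C). -/
/-- Jaccard distance between two finite sets. -/
noncomputable def jaccardDist {α : Type*} [DecidableEq α] (A B : Finset α) : ℝ :=
  (((A ∪ B).card : ℝ) - ((A ∩ B).card : ℝ)) / ((A ∪ B).card : ℝ)

lemma jaccard_key (a b c d e f g : ℝ) (ha : 0 ≤ a) (hb : 0 ≤ b) (hc : 0 ≤ c)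
    (hd : 0 ≤ d) (he : 0 ≤ e) (hf : 0 ≤ f) (hg : 0 ≤ g)
    (hp : 0 < a+c+d+e+f+g) (hq : 0 < a+b+d+e+f+g) (hr : 0 < b+c+d+e+f+g) :
    (a+c+d+f)/(a+c+d+e+f+g) ≤ (a+b+e+f)/(a+b+d+e+f+g) + (b+c+d+e)/(b+c+d+e+f+g) := by
  rw [div_add_div _ _ (ne_of_gt hq) (ne_of_gt hr), div_le_div_iff₀ hp (by positivity)]
  have key : ((a+b+e+f)*(b+c+d+e+f+g) + (a+b+d+e+f+g)*(b+c+d+e)) * (a+c+d+e+f+g)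
      - (a+c+d+f) * ((a+b+d+e+f+g)*(b+c+d+e+f+g))
      = a*a*b + a*a*c + a*a*d + a*a*e + a*b*b + 2*a*b*c + 2*a*b*d + 4*a*b*e + 2*a*b*f + 2*a*b*g + a*c*c + 2*a*c*d + 4*a*c*e + 2*a*c*f + 2*a*c*g + a*d*d + 4*a*d*e + a*d*f + a*d*g + 3*a*e*e + 3*a*e*f + 3*a*e*g + b*b*c + b*b*d + 2*b*b*e + b*b*f + 2*b*b*g + b*c*c + 2*b*c*d + 4*b*c*e + 2*b*c*f + 2*b*c*g + b*d*d + 5*b*d*e + 2*b*d*f + 3*b*d*g + 4*b*e*e + 5*b*e*f + 6*b*e*g + b*f*f + 3*b*f*g + 2*b*g*g + c*c*e + c*c*f + 3*c*d*e + c*d*f + 3*c*e*e + 4*c*e*f + 3*c*e*g + c*f*f + c*f*g + 2*d*d*e + 4*d*e*e + 4*d*e*f + 4*d*e*g + 2*e*e*e + 4*e*e*f + 4*e*e*g + 2*e*f*f + 4*e*f*g + 2*e*g*g := by ring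
  have hpos : (0:ℝ) ≤ a*a*b + a*a*c + a*a*d + a*a*e + a*b*b + 2*a*b*c + 2*a*b*d + 4*a*b*e + 2*a*b*f + 2*a*b*g + a*c*c + 2*a*c*d + 4*a*c*e + 2*a*c*f + 2*a*c*g + a*d*d + 4*a*d*e + a*d*f + a*d*g + 3*a*e*e + 3*a*e*f + 3*a*e*g + b*b*c + b*b*d + 2*b*b*e + b*b*f + 2*b*b*g + b*c*c + 2*b*c*d + 4*b*c*e + 2*b*c*f + 2*b*c*g + b*d*d + 5*b*d*e + 2*b*d*f + 3*b*d*g + 4*b*e*e + 5*b*e*f + 6*b*e*g + b*f*f + 3*b*f*g + 2*b*g*g + c*c*e + c*c*f + 3*c*d*e + c*d*f + 3*c*e*e + 4*c*e*f + 3*c*e*g + c*f*f + c*f*g + 2*d*d*e + 4*d*e*e + 4*d*e*f + 4*d*e*g + 2*e*e*e + 4*e*e*f + 4*e*e*g + 2*e*f*f + 4*e*f*g + 2*e*g*g := by positivity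
  linarith

theorem jaccard_triangle {α : Type*} [DecidableEq α] (A B C : Finset α)
    (hAB : (A ∪ B).Nonempty) (hBC : (B ∪ C).Nonempty) (hAC : (A ∪ C).Nonempty) :
    jaccardDist A C ≤ jaccardDist A B + jaccardDist B C := by
  classical
  set U : Finset α := A ∪ B ∪ C with hU
  have hsum : ∀ S : Finset α, S ⊆ U → S.card = ∑ x ∈ U, if x ∈ S then 1 else 0 := by
    intro S hS
    rw [← Finset.card_filter]
    congr 1
    rw [Finset.filter_mem_eq_inter, Finset.inter_eq_right.mpr hS]
  have sA : A ⊆ U := by intro x hx; simp [hU, Finset.mem_union]; tauto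
  have sB : B ⊆ U := by intro x hx; simp [hU, Finset.mem_union]; tauto
  have sC : C ⊆ U := by intro x hx; simp [hU, Finset.mem_union]; tauto
  have s1 : A \ (B ∪ C) ⊆ U := (Finset.sdiff_subset).trans sA
  have s2 : B \ (A ∪ C) ⊆ U := (Finset.sdiff_subset).trans sB
  have s3 : C \ (A ∪ B) ⊆ U := (Finset.sdiff_subset).trans sC
  have s4 : (A ∩ B) \ C ⊆ U := (Finset.sdiff_subset).trans ((Finset.inter_subset_left).trans sA)
  have s5 : (A ∩ C) \ B ⊆ U := (Finset.sdiff_subset).trans ((Finset.inter_subset_left).trans sA)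
  have s6 : (B ∩ C) \ A ⊆ U := (Finset.sdiff_subset).trans ((Finset.inter_subset_left).trans sB)
  have s7 : A ∩ B ∩ C ⊆ U := (Finset.inter_subset_right).trans sC
  have sAB : A ∪ B ⊆ U := Finset.union_subset sA sB
  have sAC : A ∪ C ⊆ U := Finset.union_subset sA sC
  have sBC : B ∪ C ⊆ U := Finset.union_subset sB sC
  have iAB : A ∩ B ⊆ U := (Finset.inter_subset_left).trans sA
  have iAC : A ∩ C ⊆ U := (Finset.inter_subset_left).trans sA
  have iBC : B ∩ C ⊆ U := (Finset.inter_subset_left).trans sB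
  have decompose : ∀ (S : Finset α) (hS : S ⊆ U) (c1 c2 c3 c4 c5 c6 c7 : ℕ),
      (∀ x, (if x ∈ S then 1 else 0) =
        c1 * (if x ∈ A \ (B ∪ C) then 1 else 0) + c2 * (if x ∈ B \ (A ∪ C) then 1 else 0)
        + c3 * (if x ∈ C \ (A ∪ B) then 1 else 0) + c4 * (if x ∈ (A ∩ B) \ C then 1 else 0)
        + c5 * (if x ∈ (A ∩ C) \ B then 1 else 0) + c6 * (if x ∈ (B ∩ C) \ A then 1 else 0)
        + c7 * (if x ∈ A ∩ B ∩ C then 1 else 0)) →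
      S.card = c1*(A \ (B ∪ C)).card + c2*(B \ (A ∪ C)).card + c3*(C \ (A ∪ B)).card
        + c4*((A ∩ B) \ C).card + c5*((A ∩ C) \ B).card + c6*((B ∩ C) \ A).card
        + c7*(A ∩ B ∩ C).card := by
    intro S hS c1 c2 c3 c4 c5 c6 c7 hpt
    rw [hsum S hS, hsum _ s1, hsum _ s2, hsum _ s3, hsum _ s4, hsum _ s5, hsum _ s6, hsum _ s7]
    simp only [Finset.mul_sum, ← Finset.sum_add_distrib]
    exact Finset.sum_congr rfl (fun x _ => hpt x)
  have hAB1 := decompose (A ∪ B) sAB 1 1 0 1 1 1 1 (by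
    intro x
    by_cases h1 : x ∈ A <;> by_cases h2 : x ∈ B <;> by_cases h3 : x ∈ C <;>
      simp [Finset.mem_union, Finset.mem_inter, Finset.mem_sdiff, h1, h2, h3])
  have hAB2 := decompose (A ∩ B) iAB 0 0 0 1 0 0 1 (by
    intro x
    by_cases h1 : x ∈ A <;> by_cases h2 : x ∈ B <;> by_cases h3 : x ∈ C <;>
      simp [Finset.mem_union, Finset.mem_inter, Finset.mem_sdiff, h1, h2, h3])
  have hAC1 := decompose (A ∪ C) sAC 1 0 1 1 1 1 1 (by
    intro x
    by_cases h1 : x ∈ A <;> by_cases h2 : x ∈ B <;> by_cases h3 : x ∈ C <;>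
      simp [Finset.mem_union, Finset.mem_inter, Finset.mem_sdiff, h1, h2, h3])
  have hAC2 := decompose (A ∩ C) iAC 0 0 0 0 1 0 1 (by
    intro x
    by_cases h1 : x ∈ A <;> by_cases h2 : x ∈ B <;> by_cases h3 : x ∈ C <;>
      simp [Finset.mem_union, Finset.mem_inter, Finset.mem_sdiff, h1, h2, h3])
  have hBC1 := decompose (B ∪ C) sBC 0 1 1 1 1 1 1 (by
    intro x
    by_cases h1 : x ∈ A <;> by_cases h2 : x ∈ B <;> by_cases h3 : x ∈ C <;>
      simp [Finset.mem_union, Finset.mem_inter, Finset.mem_sdiff, h1, h2, h3])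
  have hBC2 := decompose (B ∩ C) iBC 0 0 0 0 0 1 1 (by
    intro x
    by_cases h1 : x ∈ A <;> by_cases h2 : x ∈ B <;> by_cases h3 : x ∈ C <;>
      simp [Finset.mem_union, Finset.mem_inter, Finset.mem_sdiff, h1, h2, h3])
  have pAC : 0 < (A ∪ C).card := Finset.card_pos.mpr hAC
  have pAB : 0 < (A ∪ B).card := Finset.card_pos.mpr hAB
  have pBC : 0 < (B ∪ C).card := Finset.card_pos.mpr hBC
  -- names for region cards as reals
  set a : ℝ := ((A \ (B ∪ C)).card : ℝ) with hadef
  set b : ℝ := ((B \ (A ∪ C)).card : ℝ) with hbdef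
  set c : ℝ := ((C \ (A ∪ B)).card : ℝ) with hcdef
  set d : ℝ := (((A ∩ B) \ C).card : ℝ) with hddef
  set e : ℝ := (((A ∩ C) \ B).card : ℝ) with hedef
  set f : ℝ := (((B ∩ C) \ A).card : ℝ) with hfdef
  set g : ℝ := ((A ∩ B ∩ C).card : ℝ) with hgdef
  have ha : (0:ℝ) ≤ a := by rw [hadef]; exact Nat.cast_nonneg _
  have hb : (0:ℝ) ≤ b := by rw [hbdef]; exact Nat.cast_nonneg _
  have hc : (0:ℝ) ≤ c := by rw [hcdef]; exact Nat.cast_nonneg _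
  have hd : (0:ℝ) ≤ d := by rw [hddef]; exact Nat.cast_nonneg _
  have he : (0:ℝ) ≤ e := by rw [hedef]; exact Nat.cast_nonneg _
  have hf : (0:ℝ) ≤ f := by rw [hfdef]; exact Nat.cast_nonneg _
  have hg : (0:ℝ) ≤ g := by rw [hgdef]; exact Nat.cast_nonneg _
  have cAB1 : ((A ∪ B).card : ℝ) = a+b+d+e+f+g := by
    rw [hAB1]; simp only [hadef, hbdef, hcdef, hddef, hedef, hfdef, hgdef]; push_cast; ring
  have cAB2 : ((A ∩ B).card : ℝ) = d+g := by
    rw [hAB2]; simp only [hadef, hbdef, hcdef, hddef, hedef, hfdef, hgdef]; push_cast; ring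
  have cAC1 : ((A ∪ C).card : ℝ) = a+c+d+e+f+g := by
    rw [hAC1]; simp only [hadef, hbdef, hcdef, hddef, hedef, hfdef, hgdef]; push_cast; ring
  have cAC2 : ((A ∩ C).card : ℝ) = e+g := by
    rw [hAC2]; simp only [hadef, hbdef, hcdef, hddef, hedef, hfdef, hgdef]; push_cast; ring
  have cBC1 : ((B ∪ C).card : ℝ) = b+c+d+e+f+g := by
    rw [hBC1]; simp only [hadef, hbdef, hcdef, hddef, hedef, hfdef, hgdef]; push_cast; ring
  have cBC2 : ((B ∩ C).card : ℝ) = f+g := by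
    rw [hBC2]; simp only [hadef, hbdef, hcdef, hddef, hedef, hfdef, hgdef]; push_cast; ring
  have hp : (0:ℝ) < a+c+d+e+f+g := by
    rw [← cAC1]; exact_mod_cast pAC
  have hq : (0:ℝ) < a+b+d+e+f+g := by
    rw [← cAB1]; exact_mod_cast pAB
  have hr : (0:ℝ) < b+c+d+e+f+g := by
    rw [← cBC1]; exact_mod_cast pBC
  have hmain := jaccard_key a b c d e f g ha hb hc hd he hf hg hp hq hr
  have eAC : jaccardDist A C = (a+c+d+f)/(a+c+d+e+f+g) := by
    rw [jaccardDist, cAC1, cAC2]; ring_nf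
  have eAB : jaccardDist A B = (a+b+e+f)/(a+b+d+e+f+g) := by
    rw [jaccardDist, cAB1, cAB2]; ring_nf
  have eBC : jaccardDist B C = (b+c+d+e)/(b+c+d+e+f+g) := by
    rw [jaccardDist, cBC1, cBC2]; ring_nf
  rw [eAC, eAB, eBC]
  exact hmain
end

section
/- Suppose S ⊆ D has horizontal intersections H_i that are empty or consecutive, and |H_i| ≥ N whenever H_i ≠ ∅, and suppose the distance of S to the boundary B of D is at least N - 1. Then every length-N horizontal window {(i, r+j-1) : j = 1,…,N} with 1 ≤ r ≤ n - N + 1 contains at most one change point, i.e., the indicator sequence 𝟙_S(i, r+j-1), j = 1,…,N, changes value at most once. -/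
/-- The rectangular grid domain `{1,…,m} × {1,…,n}` in `ℤ²`. -/
def gridD (m n : ℤ) : Set (ℤ × ℤ) :=
  {p | 1 ≤ p.1 ∧ p.1 ≤ m ∧ 1 ≤ p.2 ∧ p.2 ≤ n}

/-- Nearest-neighbour adjacency on `ℤ²`. -/
def gridAdj (p q : ℤ × ℤ) : Prop := |p.1 - q.1| + |p.2 - q.2| = 1

/-- The boundary of the grid: points with fewer than four neighbours inside. -/
def gridBoundary (m n : ℤ) : Set (ℤ × ℤ) :=
  {p ∈ gridD m n | {q ∈ gridD m n | gridAdj p q}.ncard < 4}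

/-- There is a path of length `k` between `u` and `v` inside the grid. -/
def gridPath (m n : ℤ) (u v : ℤ × ℤ) (k : ℕ) : Prop :=
  ∃ f : ℕ → ℤ × ℤ, f 0 = u ∧ f k = v ∧ (∀ s ≤ k, f s ∈ gridD m n) ∧
    ∀ s < k, gridAdj (f s) (f (s + 1))

/-- The graph (shortest-path) distance inside the grid. -/
noncomputable def gridDist (m n : ℤ) (u v : ℤ × ℤ) : ℕ :=
  sInf {k | gridPath m n u v k}

theorem at_most_one_change_in_window {m n N : ℤ} (hN : 4 ≤ N)
    (S : Set (ℤ × ℤ)) (hS : S ⊆ gridD m n)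
    (hconsec : ∀ i l₁ l l₂ : ℤ, (i, l₁) ∈ S → (i, l₂) ∈ S → l₁ ≤ l → l ≤ l₂ → (i, l) ∈ S)
    (hsize : ∀ i : ℤ, (∃ l, (i, l) ∈ S) → N ≤ ({l : ℤ | (i, l) ∈ S}).ncard)
    (hdist : ∀ s ∈ S, ∀ b ∈ gridBoundary m n, N - 1 ≤ (gridDist m n s b : ℤ))
    (i r : ℤ) (hi : 1 ≤ i ∧ i ≤ m) (hr : 1 ≤ r ∧ r ≤ n - N + 1) :
    ∀ j₁ j₂ : ℤ, 1 ≤ j₁ → j₁ ≤ N - 1 → 1 ≤ j₂ → j₂ ≤ N - 1 →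
      ¬((i, r + j₁ - 1) ∈ S ↔ (i, r + j₁) ∈ S) →
      ¬((i, r + j₂ - 1) ∈ S ↔ (i, r + j₂) ∈ S) →
      j₁ = j₂ := by
  have key : ∀ j₁ j₂ : ℤ, 1 ≤ j₁ → j₁ ≤ N - 1 → 1 ≤ j₂ → j₂ ≤ N - 1 →
      ¬((i, r + j₁ - 1) ∈ S ↔ (i, r + j₁) ∈ S) →
      ¬((i, r + j₂ - 1) ∈ S ↔ (i, r + j₂) ∈ S) → ¬ j₁ < j₂ := by
    intro j₁ j₂ h1 h2 h3 h4 c1 c2 hlt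
    by_cases hA : (i, r + j₁ - 1) ∈ S
    · have hB : (i, r + j₁) ∉ S := fun h => c1 ⟨fun _ => h, fun _ => hA⟩
      by_cases hC : (i, r + j₂ - 1) ∈ S
      · exact hB (hconsec i (r + j₁ - 1) (r + j₁) (r + j₂ - 1) hA hC (by linarith) (by linarith))
      · have hD : (i, r + j₂) ∈ S := by
          by_contra hD
          exact c2 ⟨fun h => absurd h hC, fun h => absurd h hD⟩
        exact hB (hconsec i (r + j₁ - 1) (r + j₁) (r + j₂) hA hD (by linarith) (by linarith))
    · have hB : (i, r + j₁) ∈ S := by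
        by_contra hB
        exact c1 ⟨fun h => absurd h hA, fun h => absurd h hB⟩
      by_cases hC : (i, r + j₂ - 1) ∈ S
      · have hD : (i, r + j₂) ∉ S := fun h => c2 ⟨fun _ => h, fun _ => hC⟩
        have hT : {l : ℤ | (i, l) ∈ S} = Set.Icc (r + j₁) (r + j₂ - 1) := by
          ext l
          simp only [Set.mem_setOf_eq, Set.mem_Icc]
          constructor
          · intro hl
            constructor
            · by_contra hc
              push_neg at hc
              exact hA (hconsec i l (r + j₁ - 1) (r + j₂ - 1) hl hC (by linarith) (by linarith))
            · by_contra hc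
              push_neg at hc
              exact hD (hconsec i (r + j₁) (r + j₂) l hB hl (by linarith) (by linarith))
          · intro ⟨ha, hb⟩
            exact hconsec i (r + j₁) l (r + j₂ - 1) hB hC ha hb
        have hs := hsize i ⟨r + j₁, hB⟩
        rw [hT, ← Finset.coe_Icc, Set.ncard_coe_finset, Int.card_Icc] at hs
        have h5 : ((r + j₂ - 1 + 1 - (r + j₁)).toNat : ℤ) = j₂ - j₁ := by
          rw [Int.toNat_of_nonneg (by linarith)]; ring
        have h6 : N ≤ ((r + j₂ - 1 + 1 - (r + j₁)).toNat : ℤ) := by exact_mod_cast hs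
        linarith [h5 ▸ h6]
      · have hD : (i, r + j₂) ∈ S := by
          by_contra hD
          exact c2 ⟨fun h => absurd h hC, fun h => absurd h hD⟩
        exact hC (hconsec i (r + j₁) (r + j₂ - 1) (r + j₂) hB hD (by linarith) (by linarith))
  intro j₁ j₂ h1 h2 h3 h4 c1 c2
  rcases lt_trichotomy j₁ j₂ with h | h | h
  · exact absurd h (key j₁ j₂ h1 h2 h3 h4 c1 c2)
  · exact h
  · exact absurd h (key j₂ j₁ h3 h4 h1 h2 c2 c1)
end

section
/- For the noiseless step sequence a_j = 0 (j ≤ u), a_j = Δ (j > u) with Δ ≠ 0 and any γ ∈ [0,1/2), the weighted CUSUM h(p) = ((p/N)(1-p/N))^{-γ} · |Σ_{j=1}^p (a_j - ā_N)| attains its maximum over p ∈ {1,…,N-1} uniquely at p = u. -/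
open Finset

/-- The noiseless step sequence: `0` for `j ≤ u`, `Δ` for `j > u`. -/
noncomputable def stepSeq (u : ℕ) (Δ : ℝ) (j : ℕ) : ℝ := if j ≤ u then 0 else Δ

/-- The weighted CUSUM of the centered noiseless step sequence. -/
noncomputable def wcusum (γ : ℝ) (N u : ℕ) (Δ : ℝ) (p : ℕ) : ℝ :=
  (((p : ℝ) / N) * (1 - (p : ℝ) / N)) ^ (-γ) *
    |∑ j ∈ Icc 1 p, (stepSeq u Δ j - (∑ j' ∈ Icc 1 N, stepSeq u Δ j') / N)|

lemma sum_stepSeq (u : ℕ) (Δ : ℝ) (p : ℕ) :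
    ∑ j ∈ Icc 1 p, stepSeq u Δ j = Δ * ((p - u : ℕ) : ℝ) := by
  induction p with
  | zero => simp
  | succ p ih =>
    rw [Finset.sum_Icc_succ_top (Nat.succ_le_succ (Nat.zero_le p)), ih]
    by_cases h : p + 1 ≤ u
    · have h1 : p + 1 - u = 0 := by omega
      have h2 : p - u = 0 := by omega
      simp [stepSeq, h, h1, h2]
    · have h1 : p + 1 - u = (p - u) + 1 := by omega
      simp only [stepSeq, if_neg h, h1]
      push_cast
      ring

lemma key_ineq (γ : ℝ) (hγ0 : 0 ≤ γ) (hγ1 : γ < 1) (wp wu gp gu : ℝ)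
    (hwp : 0 < wp) (hwu : 0 < wu) (hgp : 0 < gp)
    (h1 : gp < gu) (h2 : wu * gp ≤ wp * gu) :
    wp ^ (-γ) * gp < wu ^ (-γ) * gu := by
  have hgu : 0 < gu := lt_trans hgp h1
  have h1' : 1 < gu / gp := (one_lt_div hgp).2 h1
  have h2' : wu / wp ≤ gu / gp := by
    rw [div_le_div_iff₀ hwp hgp]; linarith
  have hr : (wu / wp) ^ γ < gu / gp := by
    calc (wu / wp) ^ γ ≤ (gu / gp) ^ γ :=
          Real.rpow_le_rpow (div_pos hwu hwp).le h2' hγ0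
    _ < (gu / gp) ^ (1 : ℝ) := (Real.rpow_lt_rpow_left_iff h1').2 hγ1
    _ = gu / gp := Real.rpow_one _
  rw [Real.div_rpow hwu.le hwp.le] at hr
  have hwpg : 0 < wp ^ γ := Real.rpow_pos_of_pos hwp γ
  have hwug : 0 < wu ^ γ := Real.rpow_pos_of_pos hwu γ
  rw [div_lt_div_iff₀ hwpg hgp] at hr
  rw [Real.rpow_neg hwp.le, Real.rpow_neg hwu.le]
  rw [inv_mul_eq_div, inv_mul_eq_div, div_lt_div_iff₀ hwpg hwug]
  nlinarith

set_option maxHeartbeats 1000000 in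
theorem weighted_cusum_unique_max (N u : ℕ) (hN : 2 ≤ N) (hu1 : 1 ≤ u)
    (huN : u ≤ N - 1) (Δ : ℝ) (hΔ : Δ ≠ 0) (γ : ℝ) (hγ0 : 0 ≤ γ) (hγ : γ < 1 / 2) :
    ∀ p, 1 ≤ p → p ≤ N - 1 → p ≠ u → wcusum γ N u Δ p < wcusum γ N u Δ u := by
  intro p hp1 hpN hpu
  have hNr : (2 : ℝ) ≤ (N : ℝ) := by exact_mod_cast hN
  have hN0 : (0 : ℝ) < N := by linarith
  have hNne : (N : ℝ) ≠ 0 := ne_of_gt hN0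
  have hpN' : p < N := by omega
  have huN' : u < N := by omega
  have hpr1 : (1 : ℝ) ≤ (p : ℝ) := by exact_mod_cast hp1
  have hur1 : (1 : ℝ) ≤ (u : ℝ) := by exact_mod_cast hu1
  have hprN : (p : ℝ) < N := by exact_mod_cast hpN'
  have hurN : (u : ℝ) < N := by exact_mod_cast huN'
  have habs : 0 < |Δ| := abs_pos.mpr hΔ
  -- compute the absolute value of centered partial sum
  have hsum : ∀ q : ℕ,
      |∑ j ∈ Icc 1 q, (stepSeq u Δ j - (∑ j' ∈ Icc 1 N, stepSeq u Δ j') / N)| =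
      |Δ| * |((q - u : ℕ) : ℝ) - (q : ℝ) * ((N - u : ℕ) : ℝ) / N| := by
    intro q
    rw [Finset.sum_sub_distrib, sum_stepSeq, sum_stepSeq, Finset.sum_const,
      Nat.card_Icc, Nat.add_sub_cancel, nsmul_eq_mul]
    rw [show Δ * ((q - u : ℕ) : ℝ) - (q : ℝ) * (Δ * ((N - u : ℕ) : ℝ) / ↑N)
        = Δ * (((q - u : ℕ) : ℝ) - (q : ℝ) * ((N - u : ℕ) : ℝ) / N) by ring,
      abs_mul]
  have hNu : ((N - u : ℕ) : ℝ) = (N : ℝ) - u := by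
    rw [Nat.cast_sub huN'.le]
  -- g values
  have habsval : ∀ q : ℕ, 1 ≤ q → q < N →
      |((q - u : ℕ) : ℝ) - (q : ℝ) * ((N - u : ℕ) : ℝ) / N| =
      if q ≤ u then (q : ℝ) * ((N : ℝ) - u) / N else (u : ℝ) * ((N : ℝ) - q) / N := by
    intro q hq1 hqN
    have hqrN : (q : ℝ) < N := by exact_mod_cast hqN
    have hqr1 : (1 : ℝ) ≤ (q : ℝ) := by exact_mod_cast hq1
    rw [hNu]
    by_cases h : q ≤ u
    · have h0 : ((q - u : ℕ) : ℝ) = 0 := by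
        have : q - u = 0 := by omega
        simp [this]
      rw [h0, if_pos h]
      rw [show (0 : ℝ) - (q : ℝ) * ((N : ℝ) - u) / N = -((q : ℝ) * ((N : ℝ) - u) / N) by ring,
        abs_neg, abs_of_nonneg]
      apply div_nonneg (by nlinarith) (by linarith)
    · push_neg at h
      have hqu : ((q - u : ℕ) : ℝ) = (q : ℝ) - u := by
        rw [Nat.cast_sub h.le]
      rw [hqu, if_neg (by omega)]
      rw [show (q : ℝ) - u - (q : ℝ) * ((N : ℝ) - u) / N = -((u : ℝ) * ((N : ℝ) - q) / N) by
        field_simp; ring, abs_neg, abs_of_nonneg]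
      apply div_nonneg (by nlinarith) (by linarith)
  unfold wcusum
  rw [hsum p, hsum u, habsval p hp1 hpN', habsval u hu1 huN', if_pos le_rfl]
  have hrw : ∀ w g : ℝ, w ^ (-γ) * (|Δ| * g) = |Δ| * (w ^ (-γ) * g) := by
    intro w g; ring
  rw [hrw, hrw]
  apply mul_lt_mul_of_pos_left _ habs
  have hγ1 : γ < 1 := by linarith
  have hwp : 0 < ((p : ℝ) / N) * (1 - (p : ℝ) / N) := by
    have h1 : (0:ℝ) < (p : ℝ) / N := by positivity
    have h2 : (p : ℝ) / N < 1 := (div_lt_one hN0).2 hprN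
    nlinarith
  have hwu : 0 < ((u : ℝ) / N) * (1 - (u : ℝ) / N) := by
    have h1 : (0:ℝ) < (u : ℝ) / N := by positivity
    have h2 : (u : ℝ) / N < 1 := (div_lt_one hN0).2 hurN
    nlinarith
  by_cases h : p ≤ u
  · have hplt : (p : ℝ) < u := by
      have : p < u := by omega
      exact_mod_cast this
    rw [if_pos h]
    apply key_ineq γ hγ0 hγ1 _ _ _ _ hwp hwu
    · exact div_pos (mul_pos (by linarith) (by linarith)) hN0
    · rw [div_lt_div_iff₀ hN0 hN0]
      nlinarith [mul_pos (mul_pos (sub_pos.mpr hplt) (show (0:ℝ) < (N:ℝ) - u by linarith)) hN0]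
    · have hN3 : (0:ℝ) < (N:ℝ) * N * (N:ℝ) := mul_pos (mul_pos hN0 hN0) hN0
      have e1 : ∀ x : ℝ, (1:ℝ) - x / N = ((N:ℝ) - x) / N := by
        intro x; rw [sub_div, div_self hNne]
      rw [e1, e1, div_mul_div_comm, div_mul_div_comm, div_mul_div_comm, div_mul_div_comm,
        div_le_div_iff₀ hN3 hN3]
      apply mul_le_mul_of_nonneg_right ?_ hN3.le
      nlinarith [mul_nonneg (mul_nonneg (mul_nonneg (show (0:ℝ) ≤ u by linarith)
        (show (0:ℝ) ≤ p by linarith)) (show (0:ℝ) ≤ (N:ℝ) - u by linarith))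
        (show (0:ℝ) ≤ (u:ℝ) - p by linarith)]
  · push_neg at h
    have hult : (u : ℝ) < p := by exact_mod_cast h
    rw [if_neg (by omega)]
    apply key_ineq γ hγ0 hγ1 _ _ _ _ hwp hwu
    · exact div_pos (mul_pos (by linarith) (by linarith)) hN0
    · rw [div_lt_div_iff₀ hN0 hN0]
      nlinarith [mul_pos (mul_pos (show (0:ℝ) < (u:ℝ) by linarith) (sub_pos.mpr hult)) hN0]
    · have hN3 : (0:ℝ) < (N:ℝ) * N * (N:ℝ) := mul_pos (mul_pos hN0 hN0) hN0
      have e1 : ∀ x : ℝ, (1:ℝ) - x / N = ((N:ℝ) - x) / N := by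
        intro x; rw [sub_div, div_self hNne]
      rw [e1, e1, div_mul_div_comm, div_mul_div_comm, div_mul_div_comm, div_mul_div_comm,
        div_le_div_iff₀ hN3 hN3]
      apply mul_le_mul_of_nonneg_right ?_ hN3.le
      nlinarith [mul_nonneg (mul_nonneg (mul_nonneg (show (0:ℝ) ≤ u by linarith)
        (show (0:ℝ) ≤ (N:ℝ) - u by linarith)) (show (0:ℝ) ≤ (N:ℝ) - p by linarith))
        (show (0:ℝ) ≤ (p:ℝ) - u by linarith)]
end
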